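/- Let 0 ≤ θ₀ < θ ≤ 1 and m > 1, let a ≥ 0 be measurable on (0,∞), and let the coagulation kernel k satisfy hypothesis (K1) with constant k_* > 0. Then for all ψ, φ ∈ Y the function K(ψ,φ) belongs to E₀ and ‖K(ψ,φ)‖_{E₀} ≤ (3k_*/2)·‖ψ‖_Y·‖φ‖_Y. -/

import Mathlib

open MeasureTheory Set Real
open scoped ENNReal

/-- The weight `ℓ`: `ℓ(x) = x^(1-2θ₀)` for `x ∈ (0,1)` and
`ℓ(x) = (1+a(x))^θ · x^m` for `x > 1`. -/
noncomputable def ell (a : ℝ → ℝ) (θ₀ θ m : ℝ) (x : ℝ) : ℝ :=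
  if x < 1 then x ^ (1 - 2 * θ₀) else (1 + a x) ^ θ * x ^ m

/-- The coagulation operator
`K(ψ,φ)(x) = (1/2)∫₀^x k(y, x−y)ψ(y)φ(x−y) dy − ψ(x)∫₀^∞ k(x,y)φ(y) dy`. -/
noncomputable def coagOp (k : ℝ → ℝ → ℝ) (ψ φ : ℝ → ℝ) (x : ℝ) : ℝ :=
  (1 / 2) * (∫ y in Ioo 0 x, k y (x - y) * ψ y * φ (x - y))
    - ψ x * ∫ y in Ioi (0 : ℝ), k x y * φ y

lemma coag_lint_shift (h : ℝ → ℝ≥0∞) (y : ℝ) :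
    ∫⁻ x in Ioi y, h (x - y) = ∫⁻ v in Ioi (0:ℝ), h v := by
  have := (measurePreserving_add_right volume y).setLIntegral_comp_emb
    (measurableEmbedding_addRight y) (fun x => h (x - y)) (Ioi 0)
  simp only [add_sub_cancel_right, image_add_const_Ioi, zero_add] at this
  exact this.symm

/-- Auxiliary product-space representation of the convolution-type integrand. -/
noncomputable def coagConvF (g h : ℝ → ℝ≥0∞) : ℝ × ℝ → ℝ≥0∞ :=
  fun p => Set.indicator {q : ℝ × ℝ | 0 < q.2 ∧ q.2 < q.1}
    (fun q => g q.2 * h (q.1 - q.2)) p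

lemma coagConvF_measurable {g h : ℝ → ℝ≥0∞} (hg : Measurable g) (hh : Measurable h) :
    Measurable (coagConvF g h) := by
  apply Measurable.indicator
  · exact (hg.comp measurable_snd).mul (hh.comp (measurable_fst.sub measurable_snd))
  · exact (measurableSet_lt measurable_const measurable_snd).inter
      (measurableSet_lt measurable_snd measurable_fst)

lemma coagConvF_inner (g h : ℝ → ℝ≥0∞) (x : ℝ) :
    ∫⁻ y, coagConvF g h (x, y) = ∫⁻ y in Ioo 0 x, g y * h (x - y) := by
  rw [← lintegral_indicator measurableSet_Ioo]
  congr 1 with y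

lemma coagConvF_total {g h : ℝ → ℝ≥0∞} (hg : Measurable g) (hh : Measurable h) :
    ∫⁻ x in Ioi (0:ℝ), ∫⁻ y, coagConvF g h (x, y) =
      (∫⁻ y in Ioi (0:ℝ), g y) * ∫⁻ v in Ioi (0:ℝ), h v := by
  have hswap : ∫⁻ x, ∫⁻ y, coagConvF g h (x, y) = ∫⁻ y, ∫⁻ x, coagConvF g h (x, y) :=
    lintegral_lintegral_swap (coagConvF_measurable hg hh).aemeasurable
  have h1 : ∫⁻ x in Ioi (0:ℝ), ∫⁻ y, coagConvF g h (x, y)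
      = ∫⁻ x, ∫⁻ y, coagConvF g h (x, y) := by
    rw [← lintegral_indicator measurableSet_Ioi]
    congr 1 with x
    rcases le_or_gt x 0 with hx | hx
    · rw [Set.indicator_of_notMem (by simpa using hx)]
      have : ∀ y, coagConvF g h (x, y) = 0 := by
        intro y
        apply Set.indicator_of_notMem
        simp only [mem_setOf_eq, not_and]
        intro hy; linarith
      simp [this]
    · rw [Set.indicator_of_mem (by simpa using hx)]
  have h2 : ∀ y : ℝ, ∫⁻ x, coagConvF g h (x, y)
      = Set.indicator (Ioi (0:ℝ)) (fun y => g y * ∫⁻ v in Ioi (0:ℝ), h v) y := by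
    intro y
    rcases le_or_gt y 0 with hy | hy
    · rw [Set.indicator_of_notMem (by simpa using hy)]
      have : ∀ x, coagConvF g h (x, y) = 0 := by
        intro x
        apply Set.indicator_of_notMem
        simp only [mem_setOf_eq, not_and]
        intro hy'; linarith
      simp [this]
    · rw [Set.indicator_of_mem (by simpa using hy)]
      have : ∀ x, coagConvF g h (x, y)
          = Set.indicator (Ioi y) (fun x => g y * h (x - y)) x := by
        intro x
        simp only [coagConvF, Set.indicator_apply, mem_setOf_eq, mem_Ioi]
        simp [hy]
      simp_rw [this]
      rw [lintegral_indicator measurableSet_Ioi]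
      rw [lintegral_const_mul _ (show Measurable fun x : ℝ => h (x - y) from
        hh.comp (measurable_sub_const y))]
      rw [coag_lint_shift h y]
  rw [h1, hswap]
  simp_rw [h2]
  rw [lintegral_indicator measurableSet_Ioi, lintegral_mul_const _ hg]

lemma ell_measurable {a : ℝ → ℝ} (ha : Measurable a) (θ₀ θ m : ℝ) :
    Measurable (ell a θ₀ θ m) := by
  unfold ell
  apply Measurable.ite measurableSet_Iio
  · fun_prop
  · fun_prop

lemma coagOp_measurable {k : ℝ → ℝ → ℝ} {ψ φ : ℝ → ℝ}
    (hk : Measurable (Function.uncurry k)) (hψm : Measurable ψ) (hφm : Measurable φ) :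
    Measurable (coagOp k ψ φ) := by
  unfold coagOp
  apply Measurable.sub
  · apply Measurable.const_mul
    have hQ : StronglyMeasurable fun p : ℝ × ℝ =>
        Set.indicator {q : ℝ × ℝ | 0 < q.2 ∧ q.2 < q.1}
          (fun q => k q.2 (q.1 - q.2) * ψ q.2 * φ (q.1 - q.2)) p := by
      apply Measurable.stronglyMeasurable
      apply Measurable.indicator
      · exact ((hk.comp (measurable_snd.prodMk (measurable_fst.sub measurable_snd))).mul
          (hψm.comp measurable_snd)).mul (hφm.comp (measurable_fst.sub measurable_snd))
      · exact (measurableSet_lt measurable_const measurable_snd).inter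
          (measurableSet_lt measurable_snd measurable_fst)
    have hSM := hQ.integral_prod_right' (ν := volume)
    have heq : ∀ x : ℝ, (∫ y, Set.indicator {q : ℝ × ℝ | 0 < q.2 ∧ q.2 < q.1}
          (fun q => k q.2 (q.1 - q.2) * ψ q.2 * φ (q.1 - q.2)) (x, y))
        = ∫ y in Ioo 0 x, k y (x - y) * ψ y * φ (x - y) := by
      intro x
      rw [← integral_indicator measurableSet_Ioo]
      congr 1 with y
    rw [show (fun x => ∫ y in Ioo 0 x, k y (x - y) * ψ y * φ (x - y))
        = fun x => (∫ y, Set.indicator {q : ℝ × ℝ | 0 < q.2 ∧ q.2 < q.1}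
          (fun q => k q.2 (q.1 - q.2) * ψ q.2 * φ (q.1 - q.2)) (x, y)) from
        funext fun x => (heq x).symm]
    exact hSM.measurable
  · apply hψm.mul
    have hQ : StronglyMeasurable fun p : ℝ × ℝ => k p.1 p.2 * φ p.2 :=
      (hk.mul (hφm.comp measurable_snd)).stronglyMeasurable
    exact (hQ.integral_prod_right' (ν := volume.restrict (Ioi 0))).measurable

/-- under hypothesis (K1), for all `ψ, φ ∈ Y`, `K(ψ,φ) ∈ E₀` and
`‖K(ψ,φ)‖_{E₀} ≤ (3 k_*/2) ‖ψ‖_Y ‖φ‖_Y`. -/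
theorem coag_bilinear_Y_to_E0 (a : ℝ → ℝ) (θ₀ θ m kstar : ℝ) (k : ℝ → ℝ → ℝ)
    (ψ φ : ℝ → ℝ)
    (hθ₀ : 0 ≤ θ₀) (hθ₀θ : θ₀ < θ) (hθ : θ ≤ 1) (hm : 1 < m)
    (ha : Measurable a) (ha0 : ∀ x ∈ Ioi (0 : ℝ), 0 ≤ a x)
    (hk : Measurable (Function.uncurry k))
    (hksym : ∀ x y : ℝ, 0 < x → 0 < y → k x y = k y x)
    (hknn : ∀ x y : ℝ, 0 < x → 0 < y → 0 ≤ k x y)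
    (hkstar : 0 < kstar)
    (hK1 : ∀ x y : ℝ, 0 < x → 0 < y →
      k x y ≤ kstar * ell a θ₀ θ m x * ell a θ₀ θ m y / (x + y + (x + y) ^ m))
    (hψm : Measurable ψ) (hφm : Measurable φ)
    (hψY : IntegrableOn (fun x => ell a θ₀ θ m x * |ψ x|) (Ioi 0))
    (hφY : IntegrableOn (fun x => ell a θ₀ θ m x * |φ x|) (Ioi 0)) :
    IntegrableOn (fun x => (x + x ^ m) * |coagOp k ψ φ x|) (Ioi 0) ∧
      (∫ x in Ioi (0 : ℝ), (x + x ^ m) * |coagOp k ψ φ x|) ≤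
        (3 * kstar / 2) * (∫ x in Ioi (0 : ℝ), ell a θ₀ θ m x * |ψ x|) *
          (∫ x in Ioi (0 : ℝ), ell a θ₀ θ m x * |φ x|) := by
  set ℓf := ell a θ₀ θ m with hℓfdef
  have hlm : Measurable ℓf := ell_measurable ha θ₀ θ m
  have hlnn : ∀ x : ℝ, 0 < x → 0 ≤ ℓf x := by
    intro x hx
    rw [hℓfdef]; unfold ell
    split
    · exact rpow_nonneg hx.le _
    · exact mul_nonneg (rpow_nonneg (by linarith [ha0 x hx]) _) (rpow_nonneg hx.le _)
  have hwnn : ∀ x : ℝ, 0 < x → 0 ≤ x + x ^ m := fun x hx => by positivity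
  have hwpos : ∀ x : ℝ, 0 < x → 0 < x + x ^ m := fun x hx => by positivity
  set g : ℝ → ℝ≥0∞ := fun y => ENNReal.ofReal (ℓf y) * (‖ψ y‖₊ : ℝ≥0∞) with hgdef
  set h : ℝ → ℝ≥0∞ := fun y => ENNReal.ofReal (ℓf y) * (‖φ y‖₊ : ℝ≥0∞) with hhdef
  have hgm : Measurable g := hlm.ennreal_ofReal.mul hψm.nnnorm.coe_nnreal_ennreal
  have hhm : Measurable h := hlm.ennreal_ofReal.mul hφm.nnnorm.coe_nnreal_ennreal
  set Iψ := ∫ x in Ioi (0:ℝ), ℓf x * |ψ x| with hIψdef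
  set Iφ := ∫ x in Ioi (0:ℝ), ℓf x * |φ x| with hIφdef
  have hIψnn : 0 ≤ Iψ :=
    setIntegral_nonneg measurableSet_Ioi fun x hx => mul_nonneg (hlnn x hx) (abs_nonneg _)
  have hIφnn : 0 ≤ Iφ :=
    setIntegral_nonneg measurableSet_Ioi fun x hx => mul_nonneg (hlnn x hx) (abs_nonneg _)
  have hCg : ∫⁻ y in Ioi (0:ℝ), g y = ENNReal.ofReal Iψ := by
    rw [hIψdef, ofReal_integral_eq_lintegral_ofReal hψY
      ((ae_restrict_iff' measurableSet_Ioi).2 (ae_of_all _ fun x hx =>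
        mul_nonneg (hlnn x hx) (abs_nonneg _)))]
    refine setLIntegral_congr_fun measurableSet_Ioi (fun x hx => ?_)
    show ENNReal.ofReal (ℓf x) * (‖ψ x‖₊ : ℝ≥0∞) = ENNReal.ofReal (ℓf x * |ψ x|)
    rw [ENNReal.ofReal_mul (hlnn x hx), ← enorm_eq_nnnorm, Real.enorm_eq_ofReal_abs]
  have hCh : ∫⁻ y in Ioi (0:ℝ), h y = ENNReal.ofReal Iφ := by
    rw [hIφdef, ofReal_integral_eq_lintegral_ofReal hφY
      ((ae_restrict_iff' measurableSet_Ioi).2 (ae_of_all _ fun x hx =>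
        mul_nonneg (hlnn x hx) (abs_nonneg _)))]
    refine setLIntegral_congr_fun measurableSet_Ioi (fun x hx => ?_)
    show ENNReal.ofReal (ℓf x) * (‖φ x‖₊ : ℝ≥0∞) = ENNReal.ofReal (ℓf x * |φ x|)
    rw [ENNReal.ofReal_mul (hlnn x hx), ← enorm_eq_nnnorm, Real.enorm_eq_ofReal_abs]
  -- key real inequalities
  have keyA : ∀ x y : ℝ, 0 < y → y < x →
      (x + x ^ m) * k y (x - y) ≤ kstar * ℓf y * ℓf (x - y) := by
    intro x y hy hyx
    have hxy : 0 < x - y := by linarith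
    have hx : 0 < x := by linarith
    have h1 := hK1 y (x - y) hy hxy
    have h2 : y + (x - y) = x := by ring
    rw [h2] at h1
    have hw := hwpos x hx
    calc (x + x ^ m) * k y (x - y)
        ≤ (x + x ^ m) * (kstar * ℓf y * ℓf (x - y) / (x + x ^ m)) :=
          mul_le_mul_of_nonneg_left h1 (hwnn x hx)
      _ = kstar * ℓf y * ℓf (x - y) := by field_simp
  have keyB : ∀ x y : ℝ, 0 < x → 0 < y →
      (x + x ^ m) * k x y ≤ kstar * ℓf x * ℓf y := by
    intro x y hx hy
    have hD : 0 < x + y + (x + y) ^ m := hwpos (x + y) (by linarith)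
    have hle : x + x ^ m ≤ x + y + (x + y) ^ m := by
      have : x ^ m ≤ (x + y) ^ m := Real.rpow_le_rpow hx.le (by linarith) (by linarith)
      linarith
    calc (x + x ^ m) * k x y
        ≤ (x + y + (x + y) ^ m) * k x y :=
          mul_le_mul_of_nonneg_right hle (hknn x y hx hy)
      _ ≤ (x + y + (x + y) ^ m) * (kstar * ℓf x * ℓf y / (x + y + (x + y) ^ m)) :=
          mul_le_mul_of_nonneg_left (hK1 x y hx hy) hD.le
      _ = kstar * ℓf x * ℓf y := by field_simp
  set Ch := ∫⁻ y in Ioi (0:ℝ), h y with hChdef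
  set Tx : ℝ → ℝ≥0∞ := fun x => ∫⁻ y in Ioo 0 x, g y * h (x - y) with hTxdef
  have hTxm : Measurable Tx := by
    have : Tx = fun x => ∫⁻ y, coagConvF g h (x, y) := by
      funext x; rw [hTxdef]; exact (coagConvF_inner g h x).symm
    rw [this]
    exact (coagConvF_measurable hgm hhm).lintegral_prod_right'
  -- the pointwise bound
  have key : ∀ x ∈ Ioi (0:ℝ), ENNReal.ofReal ((x + x ^ m) * |coagOp k ψ φ x|) ≤
      ENNReal.ofReal kstar * (ENNReal.ofReal (1/2) * Tx x + g x * Ch) := by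
    intro x hx
    rw [mem_Ioi] at hx
    rw [ENNReal.ofReal_mul (hwnn x hx)]
    set W := ENNReal.ofReal (x + x ^ m) with hWdef
    set I1 := ∫ y in Ioo 0 x, k y (x - y) * ψ y * φ (x - y) with hI1def
    set I2 := ∫ y in Ioi (0:ℝ), k x y * φ y with hI2def
    have step1 : ENNReal.ofReal |coagOp k ψ φ x| ≤
        ENNReal.ofReal (1/2) * (∫⁻ y in Ioo 0 x, (‖k y (x - y) * ψ y * φ (x - y)‖₊ : ℝ≥0∞))
        + (‖ψ x‖₊ : ℝ≥0∞) * (∫⁻ y in Ioi (0:ℝ), (‖k x y * φ y‖₊ : ℝ≥0∞)) := by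
      have t1 : |coagOp k ψ φ x| ≤ (1/2) * |I1| + |ψ x| * |I2| := by
        unfold coagOp
        rw [← hI1def, ← hI2def]
        calc |1/2 * I1 - ψ x * I2| ≤ |1/2 * I1| + |ψ x * I2| := abs_sub _ _
          _ = (1/2) * |I1| + |ψ x| * |I2| := by
              rw [abs_mul, abs_mul]; norm_num
      calc ENNReal.ofReal |coagOp k ψ φ x|
          ≤ ENNReal.ofReal ((1/2) * |I1| + |ψ x| * |I2|) := ENNReal.ofReal_le_ofReal t1
        _ = ENNReal.ofReal (1/2) * ENNReal.ofReal |I1|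
            + (‖ψ x‖₊ : ℝ≥0∞) * ENNReal.ofReal |I2| := by
            rw [ENNReal.ofReal_add (by positivity) (by positivity),
              ENNReal.ofReal_mul (by norm_num : (0:ℝ) ≤ 1/2),
              ENNReal.ofReal_mul (abs_nonneg _), ← enorm_eq_nnnorm, Real.enorm_eq_ofReal_abs]
        _ ≤ _ := by
            gcongr
            · rw [← Real.enorm_eq_ofReal_abs]
              exact enorm_integral_le_lintegral_enorm _
            · rw [← Real.enorm_eq_ofReal_abs]
              exact enorm_integral_le_lintegral_enorm _
    have hA : ∫⁻ y in Ioo 0 x, W * (‖k y (x - y) * ψ y * φ (x - y)‖₊ : ℝ≥0∞)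
        ≤ ENNReal.ofReal kstar * Tx x := by
      rw [hTxdef]
      rw [← lintegral_const_mul' _ _ ENNReal.ofReal_ne_top]
      refine setLIntegral_mono (measurable_const.mul (hgm.mul
        (hhm.comp (measurable_const.sub measurable_id)))) ?_
      intro y hy
      rw [mem_Ioo] at hy
      have hxy : 0 < x - y := by linarith
      have hknn' : 0 ≤ k y (x - y) := hknn y (x - y) hy.1 hxy
      have e1 : ((‖k y (x - y) * ψ y * φ (x - y)‖₊ : ℝ≥0∞))
          = ENNReal.ofReal (k y (x - y)) * (‖ψ y‖₊ : ℝ≥0∞) * (‖φ (x - y)‖₊ : ℝ≥0∞) := by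
        rw [nnnorm_mul, nnnorm_mul, ENNReal.coe_mul, ENNReal.coe_mul,
          ← enorm_eq_nnnorm (k y (x - y)), Real.enorm_eq_ofReal hknn']
      rw [e1, hWdef]
      calc ENNReal.ofReal (x + x ^ m) *
            (ENNReal.ofReal (k y (x - y)) * (‖ψ y‖₊ : ℝ≥0∞) * (‖φ (x - y)‖₊ : ℝ≥0∞))
          = ENNReal.ofReal ((x + x ^ m) * k y (x - y)) *
            ((‖ψ y‖₊ : ℝ≥0∞) * (‖φ (x - y)‖₊ : ℝ≥0∞)) := by
            rw [ENNReal.ofReal_mul (hwnn x hx)]; ring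
        _ ≤ ENNReal.ofReal (kstar * ℓf y * ℓf (x - y)) *
            ((‖ψ y‖₊ : ℝ≥0∞) * (‖φ (x - y)‖₊ : ℝ≥0∞)) :=
            mul_le_mul_left (ENNReal.ofReal_le_ofReal (keyA x y hy.1 hy.2)) _
        _ = ENNReal.ofReal kstar * (g y * h (x - y)) := by
            rw [ENNReal.ofReal_mul (mul_nonneg hkstar.le (hlnn y hy.1)),
              ENNReal.ofReal_mul hkstar.le, hgdef, hhdef]
            ring
    have hB : ∫⁻ y in Ioi (0:ℝ), W * ((‖k x y * φ y‖₊ : ℝ≥0∞))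
        ≤ ENNReal.ofReal kstar * (ENNReal.ofReal (ℓf x) * Ch) := by
      rw [hChdef, ← lintegral_const_mul' _ _ ENNReal.ofReal_ne_top,
        ← lintegral_const_mul' _ _ ENNReal.ofReal_ne_top]
      refine setLIntegral_mono (measurable_const.mul (measurable_const.mul hhm)) ?_
      intro y hy
      rw [mem_Ioi] at hy
      have hknn' : 0 ≤ k x y := hknn x y hx hy
      have e1 : ((‖k x y * φ y‖₊ : ℝ≥0∞))
          = ENNReal.ofReal (k x y) * (‖φ y‖₊ : ℝ≥0∞) := by
        rw [nnnorm_mul, ENNReal.coe_mul, ← enorm_eq_nnnorm (k x y), Real.enorm_eq_ofReal hknn']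
      rw [e1, hWdef]
      calc ENNReal.ofReal (x + x ^ m) * (ENNReal.ofReal (k x y) * (‖φ y‖₊ : ℝ≥0∞))
          = ENNReal.ofReal ((x + x ^ m) * k x y) * (‖φ y‖₊ : ℝ≥0∞) := by
            rw [ENNReal.ofReal_mul (hwnn x hx)]; ring
        _ ≤ ENNReal.ofReal (kstar * ℓf x * ℓf y) * (‖φ y‖₊ : ℝ≥0∞) :=
            mul_le_mul_left (ENNReal.ofReal_le_ofReal (keyB x y hx hy)) _
        _ = ENNReal.ofReal kstar * (ENNReal.ofReal (ℓf x) * h y) := by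
            rw [ENNReal.ofReal_mul (mul_nonneg hkstar.le (hlnn x hx)),
              ENNReal.ofReal_mul hkstar.le, hhdef]
            ring
    calc W * ENNReal.ofReal |coagOp k ψ φ x|
        ≤ W * (ENNReal.ofReal (1/2) *
            (∫⁻ y in Ioo 0 x, (‖k y (x - y) * ψ y * φ (x - y)‖₊ : ℝ≥0∞))
          + (‖ψ x‖₊ : ℝ≥0∞) * (∫⁻ y in Ioi (0:ℝ), (‖k x y * φ y‖₊ : ℝ≥0∞))) :=
          mul_le_mul_right step1 W
      _ = ENNReal.ofReal (1/2) *
            (∫⁻ y in Ioo 0 x, W * (‖k y (x - y) * ψ y * φ (x - y)‖₊ : ℝ≥0∞))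
          + (‖ψ x‖₊ : ℝ≥0∞) * (∫⁻ y in Ioi (0:ℝ), W * (‖k x y * φ y‖₊ : ℝ≥0∞)) := by
          rw [lintegral_const_mul' W _ ENNReal.ofReal_ne_top,
            lintegral_const_mul' W _ ENNReal.ofReal_ne_top]
          ring
      _ ≤ ENNReal.ofReal (1/2) * (ENNReal.ofReal kstar * Tx x)
          + (‖ψ x‖₊ : ℝ≥0∞) * (ENNReal.ofReal kstar * (ENNReal.ofReal (ℓf x) * Ch)) := by
          gcongr
      _ = ENNReal.ofReal kstar * (ENNReal.ofReal (1/2) * Tx x + g x * Ch) := by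
          rw [hgdef]; ring
  -- the master lintegral bound
  have master : ∫⁻ x in Ioi (0:ℝ), ENNReal.ofReal ((x + x ^ m) * |coagOp k ψ φ x|)
      ≤ ENNReal.ofReal (3 * kstar / 2 * Iψ * Iφ) := by
    have step2 : ∫⁻ x in Ioi (0:ℝ), ENNReal.ofReal ((x + x ^ m) * |coagOp k ψ φ x|)
        ≤ ∫⁻ x in Ioi (0:ℝ),
            ENNReal.ofReal kstar * (ENNReal.ofReal (1/2) * Tx x + g x * Ch) :=
      setLIntegral_mono (measurable_const.mul
        (((measurable_const.mul hTxm)).add (hgm.mul_const Ch))) key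
    have hT : ∫⁻ x in Ioi (0:ℝ), Tx x = (∫⁻ y in Ioi (0:ℝ), g y) * Ch := by
      have : ∀ x : ℝ, Tx x = ∫⁻ y, coagConvF g h (x, y) := fun x =>
        (coagConvF_inner g h x).symm
      simp_rw [this]
      rw [coagConvF_total hgm hhm, hChdef]
    have step3 : ∫⁻ x in Ioi (0:ℝ),
        ENNReal.ofReal kstar * (ENNReal.ofReal (1/2) * Tx x + g x * Ch)
        = ENNReal.ofReal kstar * (ENNReal.ofReal (1/2) *
            (ENNReal.ofReal Iψ * ENNReal.ofReal Iφ)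
          + ENNReal.ofReal Iψ * ENNReal.ofReal Iφ) := by
      rw [lintegral_const_mul' _ _ ENNReal.ofReal_ne_top,
        lintegral_add_left (hTxm.const_mul _),
        lintegral_const_mul' _ _ ENNReal.ofReal_ne_top,
        lintegral_mul_const _ hgm, hT, hCg, hCh]
    rw [step3] at step2
    refine le_trans step2 (le_of_eq ?_)
    have e2 : ENNReal.ofReal (1/2) * (ENNReal.ofReal Iψ * ENNReal.ofReal Iφ)
        + ENNReal.ofReal Iψ * ENNReal.ofReal Iφ
        = ENNReal.ofReal (3/2) * (ENNReal.ofReal Iψ * ENNReal.ofReal Iφ) := by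
      have : ENNReal.ofReal (3/2 : ℝ) = ENNReal.ofReal (1/2) + 1 := by
        rw [← ENNReal.ofReal_one, ← ENNReal.ofReal_add (by norm_num) (by norm_num)]
        norm_num
      rw [this]; ring
    rw [e2, ← ENNReal.ofReal_mul hIψnn, ← ENNReal.ofReal_mul (by norm_num : (0:ℝ) ≤ 3/2),
      ← ENNReal.ofReal_mul hkstar.le]
    congr 1
    ring
  -- conclude
  have hFm : Measurable fun x => (x + x ^ m) * |coagOp k ψ φ x| := by
    have h1 : Measurable fun x : ℝ => x + x ^ m := by fun_prop
    exact h1.mul (coagOp_measurable hk hψm hφm).abs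
  have hFnn : ∀ᵐ x ∂(volume.restrict (Ioi (0:ℝ))),
      0 ≤ (x + x ^ m) * |coagOp k ψ φ x| := by
    refine (ae_restrict_iff' measurableSet_Ioi).2 (ae_of_all _ fun x hx => ?_)
    exact mul_nonneg (hwnn x hx) (abs_nonneg _)
  have hInt : IntegrableOn (fun x => (x + x ^ m) * |coagOp k ψ φ x|) (Ioi 0) := by
    refine ⟨hFm.aestronglyMeasurable, ?_⟩
    rw [hasFiniteIntegral_iff_norm]
    calc ∫⁻ x in Ioi (0:ℝ), ENNReal.ofReal ‖(x + x ^ m) * |coagOp k ψ φ x|‖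
        = ∫⁻ x in Ioi (0:ℝ), ENNReal.ofReal ((x + x ^ m) * |coagOp k ψ φ x|) := by
          refine setLIntegral_congr_fun measurableSet_Ioi (fun x hx => ?_)
          rw [Real.norm_eq_abs, abs_of_nonneg (mul_nonneg (hwnn x hx) (abs_nonneg _))]
      _ ≤ ENNReal.ofReal (3 * kstar / 2 * Iψ * Iφ) := master
      _ < ⊤ := ENNReal.ofReal_lt_top
  refine ⟨hInt, ?_⟩
  rw [integral_eq_lintegral_of_nonneg_ae hFnn hFm.aestronglyMeasurable]
  refine ENNReal.toReal_le_of_le_ofReal (by positivity) ?_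
  calc ∫⁻ x in Ioi (0:ℝ), ENNReal.ofReal ((x + x ^ m) * |coagOp k ψ φ x|)
      ≤ ENNReal.ofReal (3 * kstar / 2 * Iψ * Iφ) := master
    _ = ENNReal.ofReal (3 * kstar / 2 * Iψ * Iφ) := rfl
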